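/- arXiv:2305.00176 — 3 statements merged into one kernel-verified Lean document; each statement's English description precedes it below -/
import Mathlib

section
/- Conversely, let A = J_m ⊕ J_n with m > n ≥ 1. If X is a matrix commuting with A whose Turnbull–Aitken diagonal parameters x₀ (top-left block) and w₀ (bottom-right block) are both nonzero, then X is invertible. -/
/-- The k×k nilpotent Jordan block with eigenvalue 0. -/
def jordanBlock (F : Type*) [Field F] (k : ℕ) : Matrix (Fin k) (Fin k) F :=
  fun i j => if (i : ℕ) + 1 = (j : ℕ) then 1 else 0

/-- The direct sum J_m ⊕ J_n, indexed by `Fin m ⊕ Fin n`. -/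
def jordanSum (F : Type*) [Field F] (m n : ℕ) :
    Matrix (Fin m ⊕ Fin n) (Fin m ⊕ Fin n) F :=
  Matrix.fromBlocks (jordanBlock F m) 0 0 (jordanBlock F n)

/-- The Turnbull–Aitken block matrix determined by the row-1 parameters
`a` (top-left m×m upper-triangular Toeplitz block), `b` (top-right m×n TA block),
and the row-(m+1) parameters `c` (bottom-left n×m TA block, whose entries depend
on the arm length j−i−(m−n)) and `d` (bottom-right n×n upper-triangular
Toeplitz block).  This is the general form of a matrix commuting with
J_m ⊕ J_n when m ≥ n. -/
def TAmat {F : Type*} [Field F] (m n : ℕ) (a b c d : ℕ → F) :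
    Matrix (Fin m ⊕ Fin n) (Fin m ⊕ Fin n) F :=
  fun p q => match p, q with
  | .inl i, .inl j => if (i : ℕ) ≤ (j : ℕ) then a ((j : ℕ) - (i : ℕ)) else 0
  | .inl i, .inr j => if (i : ℕ) ≤ (j : ℕ) then b ((j : ℕ) - (i : ℕ)) else 0
  | .inr i, .inl j => if (i : ℕ) + (m - n) ≤ (j : ℕ) then
      c ((j : ℕ) - (i : ℕ) - (m - n)) else 0
  | .inr i, .inr j => if (i : ℕ) ≤ (j : ℕ) then d ((j : ℕ) - (i : ℕ)) else 0

/-- Conversely, for m > n ≥ 1, a matrix commuting with J_m ⊕ J_n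
in Turnbull–Aitken form whose diagonal parameters x₀ and w₀ are both nonzero
is invertible. -/
theorem TA_diag_ne_zero_invertible {F : Type*} [Field F] (m n : ℕ)
    (hmn : m > n) (hn : n ≥ 1) (x y z w : ℕ → F)
    (hx : x 0 ≠ 0) (hw : w 0 ≠ 0) :
    IsUnit (TAmat (F := F) m n x y z w) := by
  classical
  set M := TAmat (F := F) m n x y z w with hM
  set f : Fin m ⊕ Fin n → ℕ := fun p => match p with
    | .inl i => 2 * (i : ℕ)
    | .inr i => 2 * (i : ℕ) + 1 with hf
  have hinj : Function.Injective f := by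
    rintro (i|i) (j|j) h <;> simp only [f] at h <;>
      first
        | (exact congrArg Sum.inl (Fin.ext (by omega)))
        | (exact congrArg Sum.inr (Fin.ext (by omega)))
        | omega
  have hbt : M.BlockTriangular f := by
    rintro (i|i) (j|j) h <;> simp only [f] at h <;>
      simp only [hM, TAmat] <;> rw [if_neg] <;> omega
  have hdiag : ∀ p, M p p ≠ 0 := by
    rintro (i|i) <;> simp [hM, TAmat, hx, hw]
  have hdet : M.det ≠ 0 := by
    rw [hbt.det]
    refine Finset.prod_ne_zero_iff.2 ?_
    intro a ha
    obtain ⟨p, -, hp⟩ := Finset.mem_image.1 ha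
    haveI : Unique {i // f i = a} :=
      ⟨⟨⟨p, hp⟩⟩, fun q => Subtype.ext (hinj (q.2.trans hp.symm))⟩
    rw [Matrix.det_unique]
    have hd : ((default : {i // f i = a}) : Fin m ⊕ Fin n) = p :=
      congrArg Subtype.val (Unique.eq_default ⟨p, hp⟩).symm
    simpa [Matrix.toSquareBlock_def, hd] using hdiag p
  exact (Matrix.isUnit_iff_isUnit_det _).2 (isUnit_iff_ne_zero.2 hdet)
end

section
/- Let A = J_m ⊕ J_n with m > n ≥ 1, let B ∈ NilC(A) have canonical rank r ≥ 1 with Turnbull–Aitken parameters satisfying (b_{n−r}, c_{n−r}) ≠ (0,0), (b_i,c_i) = (0,0) for i < n−r, and d_i = a_i for 1 ≤ i ≤ n−r. Then for any X ∈ Stab(A) with diagonal parameters x₀ ≠ 0, w₀ ≠ 0, the conjugate X⁻¹BX has the same canonical rank r; in particular its leading off-diagonal parameters are (b'_{n−r}, c'_{n−r}) = (b_{n−r} w₀ x₀⁻¹, c_{n−r} x₀ w₀⁻¹) ≠ (0,0). -/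
/-!
A matrix commuting with `J_m ⊕ J_n`, `m = n + δ`, is a 2 × 2 block matrix of truncated
upper-triangular Toeplitz matrices, and these multiply like the power-series matrices
`!![a, b; X ^ δ * c, d]` over `F⟦X⟧`: the factor `X ^ δ` is exactly what makes the truncation
harmless. In this model let `Q` represent the conjugating matrix. With `K = n - r`, the hypotheses
say `B = a • 1 + X ^ K • E` where `E = !![0, b̂; X ^ δ * ĉ, X * ê]`, so
`Q⁻¹ B Q = a • 1 + X ^ K • (Q⁻¹ E Q)`. Reading the parameters of `Q (Q⁻¹ E Q) = E Q` modulo `X`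
shows that `Q⁻¹ E Q` has the same shape as `E`, its constant off-diagonal parameters being those
of `E` scaled by `w₀ / x₀` and `x₀ / w₀`.
-/

open PowerSeries Matrix

section Toeplitz
variable {R : Type*} [CommSemiring R]

noncomputable def upperToeplitz (p q : ℕ) (f : R⟦X⟧) : Matrix (Fin p) (Fin q) R :=
  fun i j => if (i : ℕ) ≤ j then coeff ((j : ℕ) - i) f else 0

open Finset in
theorem upperToeplitz_mul {p N q : ℕ} (f g : R⟦X⟧) (hg : X ^ (q - N) ∣ g) :
    upperToeplitz p N f * upperToeplitz N q g = upperToeplitz p q (f * g) := by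
  ext i l
  simp only [mul_apply, upperToeplitz]
  split_ifs with hil
  · rw [coeff_mul]
    refine sum_bij_ne_zero (fun j _ _ => ((j : ℕ) - i, (l : ℕ) - j)) ?_ ?_ ?_ ?_
    · intro j _ hj
      split_ifs at hj <;> simp_all
      omega
    · intro j₁ _ hj₁ j₂ _ hj₂ h
      split_ifs at hj₁ hj₂ <;> simp_all
      ext; omega
    · rintro ⟨u, v⟩ huv hfg
      rw [HasAntidiagonal.mem_antidiagonal] at huv
      have hN : (i : ℕ) + u < N := by
        by_contra! hN
        exact hfg (by rw [X_pow_dvd_iff.1 hg v (by omega), mul_zero])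
      refine ⟨⟨i + u, hN⟩, mem_univ _, ?_, ?_⟩
      · simpa [show (i : ℕ) + u ≤ l by omega, show (l : ℕ) - (i + u) = v by omega] using hfg
      · simp only [Prod.mk.injEq]; omega
    · intro j _ hj
      split_ifs at hj ⊢ <;> simp_all
  · refine sum_eq_zero fun j _ => ?_
    split_ifs <;> first | omega | simp

theorem upperToeplitz_add (p q : ℕ) (f g : R⟦X⟧) :
    upperToeplitz p q f + upperToeplitz p q g = upperToeplitz p q (f + g) := by
  ext i j
  simp only [Matrix.add_apply, upperToeplitz]
  split_ifs <;> simp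

@[simp] theorem upperToeplitz_zero (p q : ℕ) : upperToeplitz p q (0 : R⟦X⟧) = 0 := by
  ext i j
  simp [upperToeplitz]

@[simp] theorem upperToeplitz_one (p : ℕ) : upperToeplitz p p (1 : R⟦X⟧) = 1 := by
  ext i j
  simp only [upperToeplitz, coeff_one, one_apply, Fin.ext_iff]
  split_ifs <;> first | rfl | omega

end Toeplitz

section BlockToeplitz
variable {R : Type*} [CommRing R]

noncomputable def blockToeplitz (m n : ℕ) (M : Matrix (Fin 2) (Fin 2) R⟦X⟧) :
    Matrix (Fin m ⊕ Fin n) (Fin m ⊕ Fin n) R :=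
  fromBlocks (upperToeplitz m m (M 0 0)) (upperToeplitz m n (M 0 1))
    (upperToeplitz n m (M 1 0)) (upperToeplitz n n (M 1 1))

theorem blockToeplitz_mul {m n : ℕ} (hnm : n ≤ m) (M N : Matrix (Fin 2) (Fin 2) R⟦X⟧)
    (hN : X ^ (m - n) ∣ N 1 0) :
    blockToeplitz m n (M * N) = blockToeplitz m n M * blockToeplitz m n N := by
  have hX : ∀ g : R⟦X⟧, X ^ (n - m) ∣ g := by simp [Nat.sub_eq_zero_of_le hnm]
  -- `Nat.sub_self, pow_zero, one_dvd` discharge the hypothesis of `upperToeplitz_mul` when the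
  -- inner dimension is the outer one.
  simp only [blockToeplitz, fromBlocks_multiply, upperToeplitz_add, mul_apply, Fin.sum_univ_two,
    upperToeplitz_mul _ _ hN, upperToeplitz_mul _ _ (hX _), Nat.sub_self, pow_zero, one_dvd,
    upperToeplitz_mul]

@[simp] theorem blockToeplitz_one (m n : ℕ) :
    blockToeplitz m n (1 : Matrix (Fin 2) (Fin 2) R⟦X⟧) = 1 := by
  simp [blockToeplitz]

theorem inv_blockToeplitz {m n : ℕ} (hnm : n ≤ m) {M : Matrix (Fin 2) (Fin 2) R⟦X⟧}
    (hM : X ^ (m - n) ∣ M 1 0) (hdet : IsUnit M.det) :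
    (blockToeplitz m n M)⁻¹ = blockToeplitz m n M⁻¹ :=
  inv_eq_left_inv <| by
    rw [← blockToeplitz_mul hnm _ _ hM, nonsing_inv_mul _ hdet, blockToeplitz_one]

noncomputable def taMatrix (δ : ℕ) (a b c d : R⟦X⟧) : Matrix (Fin 2) (Fin 2) R⟦X⟧ :=
  !![a, b; X ^ δ * c, d]

end BlockToeplitz

theorem blockToeplitz_taMatrix {F : Type*} [Field F] (m n : ℕ) (a b c d : F⟦X⟧) :
    blockToeplitz m n (taMatrix (m - n) a b c d) =
      TAmat m n (coeff · a) (coeff · b) (coeff · c) (coeff · d) := by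
  ext (i | i) (j | j) <;>
    simp only [blockToeplitz, taMatrix, TAmat, upperToeplitz, fromBlocks_apply₁₁,
      fromBlocks_apply₁₂, fromBlocks_apply₂₁, fromBlocks_apply₂₂, of_apply, cons_val',
      cons_val_zero, cons_val_one, empty_val', cons_val_fin_one, coeff_X_pow_mul']
  split_ifs <;> first | rfl | omega

theorem TAmat_eq_blockToeplitz {F : Type*} [Field F] (m n : ℕ) (a b c d : ℕ → F) :
    TAmat m n a b c d = blockToeplitz m n (taMatrix (m - n) (mk a) (mk b) (mk c) (mk d)) := by
  simp [blockToeplitz_taMatrix]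

section TAMatrix
variable {R : Type*} [CommRing R] {δ : ℕ}

theorem taMatrix_mul (a b c d x y z w : R⟦X⟧) :
    taMatrix δ a b c d * taMatrix δ x y z w =
      taMatrix δ (a * x + X ^ δ * (b * z)) (a * y + b * w) (c * x + d * z)
        (X ^ δ * (c * y) + d * w) := by
  ext i j : 1
  fin_cases i <;> fin_cases j <;> simp [taMatrix, mul_apply, Fin.sum_univ_two] <;> ring

theorem taMatrix_inj {a b c d a' b' c' d' : R⟦X⟧}
    (h : taMatrix δ a b c d = taMatrix δ a' b' c' d') : a = a' ∧ b = b' ∧ c = c' ∧ d = d' := by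
  have h' := fun i j => congrFun (congrFun h i) j
  exact ⟨h' 0 0, h' 0 1, X_pow_mul_injective (h' 1 0), h' 1 1⟩

theorem inv_taMatrix (x y z w : R⟦X⟧) :
    (taMatrix δ x y z w)⁻¹ =
      let u := Ring.inverse (taMatrix δ x y z w).det
      taMatrix δ (u * w) (-(u * y)) (-(u * z)) (u * x) := by
  ext i j : 1
  fin_cases i <;> fin_cases j <;> simp [Matrix.inv_def, adjugate_fin_two, taMatrix, mul_left_comm]

theorem isUnit_det_taMatrix (hδ : 0 < δ) {x y z w : R⟦X⟧}
    (hx : IsUnit (constantCoeff x)) (hw : IsUnit (constantCoeff w)) :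
    IsUnit (taMatrix δ x y z w).det := by
  rw [isUnit_iff_constantCoeff, taMatrix, det_fin_two_of]
  simpa [hδ.ne'] using hx.mul hw

theorem X_pow_dvd_taMatrix_apply_one_zero (a b c d : R⟦X⟧) :
    X ^ δ ∣ taMatrix δ a b c d 1 0 := by
  simp [taMatrix]

theorem coeff_eq_of_X_pow_dvd_sub {N k : ℕ} {f g : R⟦X⟧} (h : X ^ N ∣ f - g) (hk : k < N) :
    coeff k f = coeff k g := by
  simpa [sub_eq_zero] using X_pow_dvd_iff.1 h k hk

theorem coeff_X_pow_mul_self (p : R⟦X⟧) (K : ℕ) : coeff K (X ^ K * p) = constantCoeff p := by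
  simpa using coeff_X_pow_mul p K 0

end TAMatrix

section Conjugation
variable {F : Type*} [Field F] {δ : ℕ}

theorem constantCoeff_of_taMatrix_intertwines (hδ : 0 < δ) {x y z w g₁ g₂ g₃ g₄ b c e : F⟦X⟧}
    (hx : constantCoeff x ≠ 0) (hw : constantCoeff w ≠ 0)
    (h : taMatrix δ x y z w * taMatrix δ g₁ g₂ g₃ g₄ =
      taMatrix δ 0 b c (X * e) * taMatrix δ x y z w) :
    constantCoeff g₁ = 0 ∧ constantCoeff g₄ = 0 ∧
      constantCoeff g₂ = constantCoeff b * constantCoeff w * (constantCoeff x)⁻¹ ∧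
      constantCoeff g₃ = constantCoeff c * constantCoeff x * (constantCoeff w)⁻¹ := by
  rw [taMatrix_mul, taMatrix_mul] at h
  obtain ⟨h₁, h₂, h₃, h₄⟩ := taMatrix_inj h
  replace h₁ := congrArg constantCoeff h₁
  replace h₂ := congrArg constantCoeff h₂
  replace h₃ := congrArg constantCoeff h₃
  replace h₄ := congrArg constantCoeff h₄
  simp only [map_add, map_mul, map_pow, constantCoeff_X, ne_eq, hδ.ne', not_false_eq_true,
    zero_pow, zero_mul, add_zero, zero_add, mul_eq_zero] at h₁ h₂ h₃ h₄
  have hg₁ : constantCoeff g₁ = 0 := h₁.resolve_left hx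
  have hg₄ : constantCoeff g₄ = 0 := h₄.resolve_left hw
  refine ⟨hg₁, hg₄, ?_, ?_⟩
  · rw [hg₄, mul_zero, add_zero] at h₂
    field_simp
    linear_combination h₂
  · rw [hg₁, mul_zero, zero_add] at h₃
    field_simp
    linear_combination h₃

theorem exists_conj_taMatrix (hδ : 0 < δ) (K : ℕ) {a b c d x y z w : F⟦X⟧}
    (hx : constantCoeff x ≠ 0) (hw : constantCoeff w ≠ 0)
    (hb : X ^ K ∣ b) (hc : X ^ K ∣ c) (hda : X ^ (K + 1) ∣ d - a) :
    ∃ a' b' c' d' : F⟦X⟧,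
      (taMatrix δ x y z w)⁻¹ * taMatrix δ a b c d * taMatrix δ x y z w = taMatrix δ a' b' c' d' ∧
      X ^ (K + 1) ∣ a' - a ∧ X ^ (K + 1) ∣ d' - a ∧ X ^ K ∣ b' ∧ X ^ K ∣ c' ∧
      coeff K b' = coeff K b * constantCoeff w * (constantCoeff x)⁻¹ ∧
      coeff K c' = coeff K c * constantCoeff x * (constantCoeff w)⁻¹ := by
  obtain ⟨b, rfl⟩ := hb
  obtain ⟨c, rfl⟩ := hc
  obtain ⟨e, he⟩ := hda
  set Q := taMatrix δ x y z w
  set E := taMatrix δ 0 b c (X * e)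
  have hQ : IsUnit Q.det := isUnit_det_taMatrix hδ hx.isUnit hw.isUnit
  have hA : taMatrix δ a (X ^ K * b) (X ^ K * c) d = a • 1 + (X ^ K : F⟦X⟧) • E := by
    rw [← sub_add_cancel d a, he]
    ext i j : 1
    fin_cases i <;> fin_cases j <;> simp [E, taMatrix] <;> ring
  obtain ⟨g₁, g₂, g₃, g₄, hG⟩ : ∃ g₁ g₂ g₃ g₄, Q⁻¹ * E * Q = taMatrix δ g₁ g₂ g₃ g₄ := by
    rw [inv_taMatrix, taMatrix_mul, taMatrix_mul]
    exact ⟨_, _, _, _, rfl⟩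
  have hQG : Q * taMatrix δ g₁ g₂ g₃ g₄ = E * Q := by
    rw [← hG, ← Matrix.mul_assoc, ← Matrix.mul_assoc, mul_nonsing_inv _ hQ, Matrix.one_mul]
  obtain ⟨hg₁, hg₄, hg₂, hg₃⟩ := constantCoeff_of_taMatrix_intertwines hδ hx hw hQG
  refine ⟨a + X ^ K * g₁, X ^ K * g₂, X ^ K * g₃, a + X ^ K * g₄, ?_, ?_, ?_,
    dvd_mul_right _ _, dvd_mul_right _ _, ?_, ?_⟩
  · rw [hA, Matrix.mul_add, Matrix.add_mul, Matrix.mul_smul, Matrix.mul_one, Matrix.smul_mul,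
      nonsing_inv_mul _ hQ, Matrix.mul_smul, Matrix.smul_mul, hG]
    ext i j : 1
    fin_cases i <;> fin_cases j <;> simp [taMatrix, mul_left_comm]
  · rw [add_sub_cancel_left, pow_succ]
    exact mul_dvd_mul_left _ (X_dvd_iff.2 hg₁)
  · rw [add_sub_cancel_left, pow_succ]
    exact mul_dvd_mul_left _ (X_dvd_iff.2 hg₄)
  · rw [coeff_X_pow_mul_self, coeff_X_pow_mul_self, hg₂]
  · rw [coeff_X_pow_mul_self, coeff_X_pow_mul_self, hg₃]

end Conjugation

theorem canonical_rank_invariant_general {F : Type*} [Field F] (m n r : ℕ)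
    (hmn : m > n)
    (a b c d : ℕ → F) (ha0 : a 0 = 0) (hd0 : d 0 = 0)
    (hlead : ¬(b (n - r) = 0 ∧ c (n - r) = 0))
    (hbc : ∀ i : ℕ, i < n - r → b i = 0 ∧ c i = 0)
    (hda : ∀ i : ℕ, 1 ≤ i → i ≤ n - r → d i = a i)
    (x y z w : ℕ → F) (hx : x 0 ≠ 0) (hw : w 0 ≠ 0) :
    ∃ a' b' c' d' : ℕ → F,
      (TAmat (F := F) m n x y z w)⁻¹ * TAmat m n a b c d * TAmat m n x y z w =
        TAmat m n a' b' c' d' ∧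
      a' 0 = 0 ∧ d' 0 = 0 ∧
      (∀ i : ℕ, i < n - r → b' i = 0 ∧ c' i = 0) ∧
      (∀ i : ℕ, 1 ≤ i → i ≤ n - r → d' i = a' i) ∧
      b' (n - r) = b (n - r) * w 0 * (x 0)⁻¹ ∧
      c' (n - r) = c (n - r) * x 0 * (w 0)⁻¹ ∧
      ¬(b' (n - r) = 0 ∧ c' (n - r) = 0) := by
  have hδ : 0 < m - n := by omega
  have hb : X ^ (n - r) ∣ mk b := X_pow_dvd_iff.2 fun i hi => by simpa using (hbc i hi).1
  have hc : X ^ (n - r) ∣ mk c := X_pow_dvd_iff.2 fun i hi => by simpa using (hbc i hi).2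
  have hda' : X ^ (n - r + 1) ∣ mk d - mk a := X_pow_dvd_iff.2 fun i hi => by
    rcases Nat.eq_zero_or_pos i with rfl | hi0
    · simp [ha0, hd0]
    · simp [hda i hi0 (by omega)]
  obtain ⟨a', b', c', d', hconj, ha', hd', hb', hc', hbK, hcK⟩ :=
    exists_conj_taMatrix hδ (n - r) (x := mk x) (y := mk y) (z := mk z) (w := mk w)
      (by simpa using hx) (by simpa using hw) hb hc hda'
  simp only [coeff_mk, constantCoeff_mk] at hbK hcK
  refine ⟨(coeff · a'), (coeff · b'), (coeff · c'), (coeff · d'), ?_,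
    (coeff_eq_of_X_pow_dvd_sub ha' (by omega)).trans (by simpa using ha0),
    (coeff_eq_of_X_pow_dvd_sub hd' (by omega)).trans (by simpa using ha0),
    fun i hi => ⟨X_pow_dvd_iff.1 hb' i hi, X_pow_dvd_iff.1 hc' i hi⟩,
    fun i _ hi => (coeff_eq_of_X_pow_dvd_sub hd' (by omega)).trans
      (coeff_eq_of_X_pow_dvd_sub ha' (by omega)).symm, hbK, hcK, ?_⟩
  · rw [TAmat_eq_blockToeplitz m n x, TAmat_eq_blockToeplitz m n a,
      inv_blockToeplitz hmn.le (X_pow_dvd_taMatrix_apply_one_zero ..)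
        (isUnit_det_taMatrix hδ (by simpa using hx.isUnit) (by simpa using hw.isUnit)),
      ← blockToeplitz_mul hmn.le _ _ (X_pow_dvd_taMatrix_apply_one_zero ..),
      ← blockToeplitz_mul hmn.le _ _ (X_pow_dvd_taMatrix_apply_one_zero ..), hconj,
      blockToeplitz_taMatrix]
  · simpa [hbK, hcK, hx, hw] using hlead

/-- invariance of the canonical rank.  For m > n ≥ 1, let
B ∈ NilC(J_m ⊕ J_n) have canonical rank r ≥ 1, i.e. its Turnbull–Aitken
parameters satisfy (b_{n−r}, c_{n−r}) ≠ (0,0), (bᵢ,cᵢ) = (0,0) for i < n−r and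
dᵢ = aᵢ for 1 ≤ i ≤ n−r.  Then for any X ∈ Stab(A) with diagonal parameters
x₀ ≠ 0, w₀ ≠ 0, the conjugate X⁻¹BX has the same canonical rank r; in
particular its leading off-diagonal parameters are
(b'_{n−r}, c'_{n−r}) = (b_{n−r} w₀ x₀⁻¹, c_{n−r} x₀ w₀⁻¹) ≠ (0,0). -/
theorem canonical_rank_invariant {F : Type*} [Field F] (m n r : ℕ)
    (hmn : m > n) (hn : n ≥ 1) (hr : 1 ≤ r) (hrn : r ≤ n)
    (a b c d : ℕ → F) (ha0 : a 0 = 0) (hd0 : d 0 = 0)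
    (hlead : ¬(b (n - r) = 0 ∧ c (n - r) = 0))
    (hbc : ∀ i : ℕ, i < n - r → b i = 0 ∧ c i = 0)
    (hda : ∀ i : ℕ, 1 ≤ i → i ≤ n - r → d i = a i)
    (hBnil : (TAmat (F := F) m n a b c d) ^ (m + n) = 0)
    (x y z w : ℕ → F) (hx : x 0 ≠ 0) (hw : w 0 ≠ 0) :
    ∃ a' b' c' d' : ℕ → F,
      (TAmat (F := F) m n x y z w)⁻¹ * TAmat m n a b c d * TAmat m n x y z w =
        TAmat m n a' b' c' d' ∧
      a' 0 = 0 ∧ d' 0 = 0 ∧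
      (∀ i : ℕ, i < n - r → b' i = 0 ∧ c' i = 0) ∧
      (∀ i : ℕ, 1 ≤ i → i ≤ n - r → d' i = a' i) ∧
      b' (n - r) = b (n - r) * w 0 * (x 0)⁻¹ ∧
      c' (n - r) = c (n - r) * x 0 * (w 0)⁻¹ ∧
      ¬(b' (n - r) = 0 ∧ c' (n - r) = 0) :=
  canonical_rank_invariant_general m n r hmn a b c d ha0 hd0 hlead hbc hda x y z w hx hw
end

section
/- Let F be a field and A = J₆ ⊕ J₄. Let B be the nilpotent matrix commuting with A with row-1 parameters (0, a₁, a₂, a₃, a₄, a₅ | b₀, b₁, b₂, b₃) and row-7 parameters (0, 0, c₀, c₁, c₂, c₃ | 0, d₁, d₂, d₃) with c₀ ≠ 0. Then (A,B) is simultaneously similar to (A, C) where C has row-1 parameters (0, a₁, 0, 0, 0, 0 | b'₀, b'₁, b'₂, b'₃) and row-7 parameters (0, 0, 1, 0, 0, 0 | 0, d₁, a₂+d₂, a₃+d₃), with b'₀ = b₀c₀, b'₁ = b₀c₁ + b₁c₀ + (a₁−d₁)a₂, b'₂ = b₀c₂ + b₁c₁ + b₂c₀ + (a₁−d₁)a₃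 − a₂d₂, b'₃ = b₀c₃ + b₁c₂ + b₂c₁ + b₃c₀ + (a₁−d₁)a₄ − a₂d₃ − a₃d₂. -/
/-- A finite sequence of six values extended by zero, used as a row-parameter
function for 6×- blocks. -/
def seq6 {F : Type*} [Field F] (v0 v1 v2 v3 v4 v5 : F) : ℕ → F
  | 0 => v0 | 1 => v1 | 2 => v2 | 3 => v3 | 4 => v4 | 5 => v5 | _ => 0

/-- A finite sequence of four values extended by zero, used as a row-parameter
function for -×4 blocks. -/
def seq4 {F : Type*} [Field F] (v0 v1 v2 v3 : F) : ℕ → F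
  | 0 => v0 | 1 => v1 | 2 => v2 | 3 => v3 | _ => 0

@[simp] lemma fv61 : ((1 : Fin 6) : ℕ) = 1 := rfl
@[simp] lemma fv62 : ((2 : Fin 6) : ℕ) = 2 := rfl
@[simp] lemma fv63 : ((3 : Fin 6) : ℕ) = 3 := rfl
@[simp] lemma fv64 : ((4 : Fin 6) : ℕ) = 4 := rfl
@[simp] lemma fv65 : ((5 : Fin 6) : ℕ) = 5 := rfl
@[simp] lemma fv41 : ((1 : Fin 4) : ℕ) = 1 := rfl
@[simp] lemma fv42 : ((2 : Fin 4) : ℕ) = 2 := rfl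
@[simp] lemma fv43 : ((3 : Fin 4) : ℕ) = 3 := rfl

@[simp] lemma seq6_0 {F : Type*} [Field F] (v0 v1 v2 v3 v4 v5 : F) : seq6 v0 v1 v2 v3 v4 v5 0 = v0 := rfl
@[simp] lemma seq6_1 {F : Type*} [Field F] (v0 v1 v2 v3 v4 v5 : F) : seq6 v0 v1 v2 v3 v4 v5 1 = v1 := rfl
@[simp] lemma seq6_2 {F : Type*} [Field F] (v0 v1 v2 v3 v4 v5 : F) : seq6 v0 v1 v2 v3 v4 v5 2 = v2 := rfl
@[simp] lemma seq6_3 {F : Type*} [Field F] (v0 v1 v2 v3 v4 v5 : F) : seq6 v0 v1 v2 v3 v4 v5 3 = v3 := rfl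
@[simp] lemma seq6_4 {F : Type*} [Field F] (v0 v1 v2 v3 v4 v5 : F) : seq6 v0 v1 v2 v3 v4 v5 4 = v4 := rfl
@[simp] lemma seq6_5 {F : Type*} [Field F] (v0 v1 v2 v3 v4 v5 : F) : seq6 v0 v1 v2 v3 v4 v5 5 = v5 := rfl
@[simp] lemma seq4_0 {F : Type*} [Field F] (v0 v1 v2 v3 : F) : seq4 v0 v1 v2 v3 0 = v0 := rfl
@[simp] lemma seq4_1 {F : Type*} [Field F] (v0 v1 v2 v3 : F) : seq4 v0 v1 v2 v3 1 = v1 := rfl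
@[simp] lemma seq4_2 {F : Type*} [Field F] (v0 v1 v2 v3 : F) : seq4 v0 v1 v2 v3 2 = v2 := rfl
@[simp] lemma seq4_3 {F : Type*} [Field F] (v0 v1 v2 v3 : F) : seq4 v0 v1 v2 v3 3 = v3 := rfl

set_option maxHeartbeats 4000000 in
lemma TA_mul {F : Type*} [Field F] (a b c d a' b' c' d' : ℕ → F) :
    TAmat 6 4 a b c d * TAmat 6 4 a' b' c' d' =
    TAmat 6 4
      (fun k => (∑ i ∈ Finset.range (k+1), a i * a' (k-i))
        + ∑ i ∈ Finset.range (k-1), b i * c' (k-2-i))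
      (fun k => ∑ i ∈ Finset.range (k+1), (a i * b' (k-i) + b i * d' (k-i)))
      (fun k => ∑ i ∈ Finset.range (k+1), (c i * a' (k-i) + d i * c' (k-i)))
      (fun k => (∑ i ∈ Finset.range (k+1), d i * d' (k-i))
        + ∑ i ∈ Finset.range (k-1), c i * b' (k-2-i)) := by
  ext p q
  obtain (i|i) := p <;> obtain (j|j) := q <;> fin_cases i <;> fin_cases j <;>
    simp [TAmat, Matrix.mul_apply, Fintype.sum_sum_type, Fin.sum_univ_six,
      Fin.sum_univ_four, Finset.sum_range_succ] <;> ring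

lemma TA_congr {F : Type*} [Field F] {a b c d a' b' c' d' : ℕ → F}
    (ha : ∀ k, k ≤ 5 → a k = a' k) (hb : ∀ k, k ≤ 3 → b k = b' k)
    (hc : ∀ k, k ≤ 3 → c k = c' k) (hd : ∀ k, k ≤ 3 → d k = d' k) :
    TAmat 6 4 a b c d = TAmat 6 4 a' b' c' d' := by
  ext p q
  obtain (i|i) := p <;> obtain (j|j) := q <;> simp only [TAmat] <;>
    split_ifs with h <;> first
      | rfl
      | (apply_assumption; omega)

set_option maxHeartbeats 1000000 in
lemma smul_one_eq_TA {F : Type*} [Field F] (t : F) :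
    t • (1 : Matrix (Fin 6 ⊕ Fin 4) (Fin 6 ⊕ Fin 4) F) =
    TAmat 6 4 (fun k => if k = 0 then t else 0) 0 0
      (fun k => if k = 0 then t else 0) := by
  ext p q
  obtain (i|i) := p <;> obtain (j|j) := q <;> fin_cases i <;> fin_cases j <;>
    simp [TAmat, Matrix.one_apply]

set_option maxHeartbeats 1000000 in
lemma jordan_eq_TA {F : Type*} [Field F] :
    jordanSum F 6 4 =
    TAmat 6 4 (fun k => if k = 1 then 1 else 0) 0 0
      (fun k => if k = 1 then 1 else 0) := by
  ext p q
  obtain (i|i) := p <;> obtain (j|j) := q <;> fin_cases i <;> fin_cases j <;>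
    simp [TAmat, jordanSum, jordanBlock, Matrix.fromBlocks]

lemma conj_eq {F : Type*} [Field F] {X W M N : Matrix (Fin 6 ⊕ Fin 4) (Fin 6 ⊕ Fin 4) F}
    (hXW : X * W = 1) (h : M * X = X * N) : X⁻¹ * M * X = N := by
  have hd : IsUnit X.det := Matrix.isUnit_det_of_right_inverse hXW
  rw [mul_assoc, h, ← mul_assoc, Matrix.nonsing_inv_mul X hd, one_mul]

set_option maxHeartbeats 16000000 in
/-- Case m = 6, n = 4, canonical rank 4 with c₀ ≠ 0.  The pair
(J₆ ⊕ J₄, B) with B having row-1 parameters (0,a₁,a₂,a₃,a₄,a₅ | b₀,b₁,b₂,b₃)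
and row-7 parameters (0,0,c₀,c₁,c₂,c₃ | 0,d₁,d₂,d₃), c₀ ≠ 0, is simultaneously
similar to (J₆ ⊕ J₄, C) where C has row-1 parameters
(0,a₁,0,0,0,0 | b'₀,b'₁,b'₂,b'₃) and row-7 parameters
(0,0,1,0,0,0 | 0,d₁,a₂+d₂,a₃+d₃), with the stated values of b'₀,…,b'₃. -/
theorem canonical_form_m6_n4_r4_c_ne_zero {F : Type*} [Field F]
    (a₁ a₂ a₃ a₄ a₅ b₀ b₁ b₂ b₃ c₀ c₁ c₂ c₃ d₁ d₂ d₃ : F) (hc : c₀ ≠ 0) :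
    ∃ X : Matrix (Fin 6 ⊕ Fin 4) (Fin 6 ⊕ Fin 4) F,
      IsUnit X ∧
      X⁻¹ * jordanSum F 6 4 * X = jordanSum F 6 4 ∧
      X⁻¹ * TAmat 6 4 (seq6 0 a₁ a₂ a₃ a₄ a₅) (seq4 b₀ b₁ b₂ b₃)
          (seq4 c₀ c₁ c₂ c₃) (seq4 0 d₁ d₂ d₃) * X =
        TAmat 6 4 (seq6 0 a₁ 0 0 0 0)
          (seq4 (b₀ * c₀)
                (b₀ * c₁ + b₁ * c₀ + (a₁ - d₁) * a₂)
                (b₀ * c₂ + b₁ * c₁ + b₂ * c₀ + (a₁ - d₁) * a₃ - a₂ * d₂)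
                (b₀ * c₃ + b₁ * c₂ + b₂ * c₁ + b₃ * c₀ + (a₁ - d₁) * a₄
                  - a₂ * d₃ - a₃ * d₂))
          (seq4 1 0 0 0) (seq4 0 d₁ (a₂ + d₂) (a₃ + d₃)) := by
  obtain ⟨xq0, hxq0⟩ : ∃ t : F, t = a₂ + b₀*c₀ := ⟨_, rfl⟩
  obtain ⟨xq1, hxq1⟩ : ∃ t : F, t = a₃ + b₀*c₁ + b₁*c₀ := ⟨_, rfl⟩
  obtain ⟨xq2, hxq2⟩ : ∃ t : F, t = a₄ + b₀*c₂ + b₁*c₁ + b₂*c₀ := ⟨_, rfl⟩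
  obtain ⟨xq3, hxq3⟩ : ∃ t : F, t = a₅ + b₀*c₃ + b₁*c₂ + b₂*c₁ + b₃*c₀ := ⟨_, rfl⟩
  obtain ⟨xs1, hxs1⟩ : ∃ t : F, t = c₁ + c₀*(d₁ - a₁) := ⟨_, rfl⟩
  obtain ⟨xs2, hxs2⟩ : ∃ t : F, t = c₂ + c₁*(d₁ - a₁) + c₀*d₂ := ⟨_, rfl⟩
  obtain ⟨xs3, hxs3⟩ : ∃ t : F, t = c₃ + c₂*(d₁ - a₁) + c₁*d₂ + c₀*d₃ := ⟨_, rfl⟩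
  obtain ⟨g2, hg2⟩ : ∃ t : F, t = xs2 - xq0*c₀ := ⟨_, rfl⟩
  obtain ⟨g3, hg3⟩ : ∃ t : F, t = xs3 - xq0*c₁ - xq1*c₀ := ⟨_, rfl⟩
  obtain ⟨zh0, hzh0⟩ : ∃ t : F, t = c₀*c₀*c₀ := ⟨_, rfl⟩
  obtain ⟨zh1, hzh1⟩ : ∃ t : F, t = -xs1*(c₀*c₀) := ⟨_, rfl⟩
  obtain ⟨zh2, hzh2⟩ : ∃ t : F, t = (xs1*xs1 - c₀*g2)*c₀ := ⟨_, rfl⟩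
  obtain ⟨zh3, hzh3⟩ : ∃ t : F, t = -(xs1*xs1*xs1) + 2*c₀*xs1*g2 - c₀*c₀*g3 := ⟨_, rfl⟩
  obtain ⟨k0, hk0⟩ : ∃ t : F, t = xq0*c₀ := ⟨_, rfl⟩
  obtain ⟨k1, hk1⟩ : ∃ t : F, t = xq0*c₁ + xq1*c₀ := ⟨_, rfl⟩
  obtain ⟨k2, hk2⟩ : ∃ t : F, t = xq0*c₂ + xq1*c₁ + xq2*c₀ := ⟨_, rfl⟩
  obtain ⟨k3, hk3⟩ : ∃ t : F, t = xq0*c₃ + xq1*c₂ + xq2*c₁ + xq3*c₀ := ⟨_, rfl⟩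
  obtain ⟨zq0, hzq0⟩ : ∃ t : F, t = -(xq0*zh0) := ⟨_, rfl⟩
  obtain ⟨zq1, hzq1⟩ : ∃ t : F, t = -(xq0*zh1 + xq1*zh0) := ⟨_, rfl⟩
  obtain ⟨zq2, hzq2⟩ : ∃ t : F, t = -(xq0*zh2 + xq1*zh1 + xq2*zh0) := ⟨_, rfl⟩
  obtain ⟨zq3, hzq3⟩ : ∃ t : F, t = -(xq0*zh3 + xq1*zh2 + xq2*zh1 + xq3*zh0) := ⟨_, rfl⟩
  obtain ⟨zr0, hzr0⟩ : ∃ t : F, t = -(c₀*zh0) := ⟨_, rfl⟩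
  obtain ⟨zr1, hzr1⟩ : ∃ t : F, t = -(c₀*zh1 + c₁*zh0) := ⟨_, rfl⟩
  obtain ⟨zr2, hzr2⟩ : ∃ t : F, t = -(c₀*zh2 + c₁*zh1 + c₂*zh0) := ⟨_, rfl⟩
  obtain ⟨zr3, hzr3⟩ : ∃ t : F, t = -(c₀*zh3 + c₁*zh2 + c₂*zh1 + c₃*zh0) := ⟨_, rfl⟩
  obtain ⟨zp0, hzp0⟩ : ∃ t : F, t = c₀*c₀*c₀*c₀ := ⟨_, rfl⟩
  obtain ⟨zp2, hzp2⟩ : ∃ t : F, t = k0*zh0 := ⟨_, rfl⟩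
  obtain ⟨zp3, hzp3⟩ : ∃ t : F, t = k0*zh1 + k1*zh0 := ⟨_, rfl⟩
  obtain ⟨zp4, hzp4⟩ : ∃ t : F, t = k0*zh2 + k1*zh1 + k2*zh0 := ⟨_, rfl⟩
  obtain ⟨zp5, hzp5⟩ : ∃ t : F, t = k0*zh3 + k1*zh2 + k2*zh1 + k3*zh0 := ⟨_, rfl⟩
  obtain ⟨X, hX⟩ : ∃ M : Matrix (Fin 6 ⊕ Fin 4) (Fin 6 ⊕ Fin 4) F,
      M = TAmat 6 4 (seq6 1 0 0 0 0 0) (seq4 xq0 xq1 xq2 xq3)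
        (seq4 c₀ c₁ c₂ c₃) (seq4 c₀ xs1 xs2 xs3) := ⟨_, rfl⟩
  obtain ⟨Z, hZ⟩ : ∃ M : Matrix (Fin 6 ⊕ Fin 4) (Fin 6 ⊕ Fin 4) F,
      M = TAmat 6 4 (seq6 zp0 0 zp2 zp3 zp4 zp5) (seq4 zq0 zq1 zq2 zq3)
        (seq4 zr0 zr1 zr2 zr3) (seq4 zh0 zh1 zh2 zh3) := ⟨_, rfl⟩
  have hXZ : X * Z = (c₀*c₀*c₀*c₀) • 1 := by
    rw [hX, hZ, TA_mul, smul_one_eq_TA]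
    refine TA_congr ?_ ?_ ?_ ?_ <;> intro k hk <;> interval_cases k <;>
      simp [Finset.sum_range_succ, hzp5, hzp4, hzp3, hzp2, hzp0, hzr3, hzr2, hzr1, hzr0, hzq3, hzq2, hzq1, hzq0, hk3, hk2, hk1, hk0, hzh3, hzh2, hzh1, hzh0, hg3, hg2, hxs3, hxs2, hxs1, hxq3, hxq2, hxq1, hxq0] <;> ring1
  have hc4 : (c₀*c₀*c₀*c₀) ≠ 0 := mul_ne_zero (mul_ne_zero (mul_ne_zero hc hc) hc) hc
  have hXW : X * ((c₀*c₀*c₀*c₀)⁻¹ • Z) = 1 := by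
    rw [Matrix.mul_smul, hXZ, smul_smul, inv_mul_cancel₀ hc4, one_smul]
  have hWX : ((c₀*c₀*c₀*c₀)⁻¹ • Z) * X = 1 := mul_eq_one_comm.mp hXW
  refine ⟨X, ⟨⟨X, _, hXW, hWX⟩, rfl⟩, ?_, ?_⟩
  · refine conj_eq hXW ?_
    rw [hX, jordan_eq_TA, TA_mul, TA_mul]
    refine TA_congr ?_ ?_ ?_ ?_ <;> intro k hk <;> interval_cases k <;>
      simp [Finset.sum_range_succ, hzp5, hzp4, hzp3, hzp2, hzp0, hzr3, hzr2, hzr1, hzr0, hzq3, hzq2, hzq1, hzq0, hk3, hk2, hk1, hk0, hzh3, hzh2, hzh1, hzh0, hg3, hg2, hxs3, hxs2, hxs1, hxq3, hxq2, hxq1, hxq0] <;> ring1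
  · refine conj_eq hXW ?_
    rw [hX, TA_mul, TA_mul]
    refine TA_congr ?_ ?_ ?_ ?_ <;> intro k hk <;> interval_cases k <;>
      simp [Finset.sum_range_succ, hzp5, hzp4, hzp3, hzp2, hzp0, hzr3, hzr2, hzr1, hzr0, hzq3, hzq2, hzq1, hzq0, hk3, hk2, hk1, hk0, hzh3, hzh2, hzh1, hzh0, hg3, hg2, hxs3, hxs2, hxs1, hxq3, hxq2, hxq1, hxq0] <;> ring1
end
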